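/- Let m, n ≥ 1 be integers with m dividing n. Let μ be an exchangeable probability measure on (Fin n → ℝ) with ∫ ‖x‖₁ dμ(x) < ∞, and let q : (Fin m → ℝ) → ℝ be Lipschitz with constant L with respect to the ℓ1 norm on Fin m → ℝ. Then | m^(−n) · ∑_{f : Fin n → Fin m} ∫ q(T_f x) dμ(x) − ∫ q(T_{d_{m,n}} x) dμ(x) | ≤ 2L · √( m²(m−1)/n ) · ∫ ‖x‖₁ dμ(x). -/

import Mathlib

/-!
By exchangeability, binning with `f` and with `f ∘ σ` give the same expected value, and a
suitable `σ` makes `f ∘ σ` monotone. Two monotone maps `Fin n → Fin m` whose bins have sizes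
`c_k` and `c'_k` disagree on at most `m ∑ₖ |c_k - c'_k|` coordinates, and every coordinate `j` on
which they disagree moves `x j` between two bins, which changes `q (T x)` by at most
`2 L |x j|`, of expectation `2 L ∫ ‖x‖₁ / n`. Comparing with the equipartition, whose bins all have
size `n / m`, the error is therefore at most `(2 L m / n) ∫ ‖x‖₁` times the average over `f` of
`∑ₖ |#f⁻¹(k) - n / m|`. For a uniformly random `f` each bin size is binomial with standard
deviation `√(n (m - 1)) / m`, and Cauchy–Schwarz bounds the mean absolute deviation by it.
-/

open MeasureTheory

/-- The binning operator: `(T_f x)(i) = ∑_{j : f j = i} x j`. -/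
noncomputable def binOp {n m : ℕ} (f : Fin n → Fin m) (x : Fin n → ℝ) : Fin m → ℝ :=
  fun i => ∑ j ∈ Finset.univ.filter (fun j => f j = i), x j

/-- For `m ∣ n`, the standard equipartition `d_{m,n} : Fin n → Fin m`. -/
def dmap (m n : ℕ) (hn : 0 < n) (hdvd : m ∣ n) : Fin n → Fin m :=
  fun x => ⟨(x : ℕ) / (n / m), by
    have hm : 0 < m := Nat.pos_of_dvd_of_pos hdvd hn
    have hb : 0 < n / m := Nat.div_pos (Nat.le_of_dvd hn hdvd) hm
    refine (Nat.div_lt_iff_lt_mul hb).mpr ?_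
    have hnm : m * (n / m) = n := Nat.mul_div_cancel' hdvd
    have := x.isLt
    omega⟩

open Finset
open scoped BigOperators symmDiff

lemma expect_abs_le_sqrt_expect_sq {ι : Type*} (s : Finset ι) (X : ι → ℝ) :
    𝔼 i ∈ s, |X i| ≤ √(𝔼 i ∈ s, X i ^ 2) := by
  refine Real.le_sqrt_of_sq_le ?_
  rcases s.eq_empty_or_nonempty with rfl | hs
  · simp
  · simpa [sq_abs, hs] using expect_mul_sq_le_sq_mul_sq s (fun i => |X i|) 1

section RandomFunction
variable {α β M : Type*} [Fintype α] [DecidableEq α] [Fintype β] [AddCommMonoid M] [Module ℚ≥0 M]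

lemma expect_fun_eq_expect_splitAt (a : α) (F : (α → β) → M) :
    𝔼 f : α → β, F f = 𝔼 b, 𝔼 g : {x // x ≠ a} → β, F ((Equiv.funSplitAt a β).symm (b, g)) := by
  rw [Fintype.expect_equiv (Equiv.funSplitAt a β) F (fun p => F ((Equiv.funSplitAt a β).symm p))
    (fun f => by rw [Equiv.symm_apply_apply]), ← univ_product_univ, expect_product]

lemma expect_comp_apply [Nonempty β] (a : α) (φ : β → M) :
    𝔼 f : α → β, φ (f a) = 𝔼 b, φ b := by
  rw [expect_fun_eq_expect_splitAt a]
  simp [Equiv.funSplitAt, Equiv.piSplitAt]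

lemma expect_comp_apply_mul_comp_apply [Nonempty β] {a a' : α} (h : a ≠ a') (φ ψ : β → ℝ) :
    𝔼 f : α → β, φ (f a) * ψ (f a') = (𝔼 b, φ b) * 𝔼 b, ψ b := by
  rw [expect_fun_eq_expect_splitAt a]
  simp [h.symm, ← mul_expect, expect_comp_apply (⟨a', h.symm⟩ : {x // x ≠ a}) ψ, expect_mul]

lemma expect_sq_sum_comp_apply [Nonempty β] {e : β → ℝ} (he : 𝔼 b, e b = 0) :
    𝔼 f : α → β, (∑ a, e (f a)) ^ 2 = Fintype.card α * 𝔼 b, e b ^ 2 := by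
  have hcross (a a' : α) :
      𝔼 f : α → β, e (f a) * e (f a') = if a = a' then 𝔼 b, e b ^ 2 else 0 := by
    split_ifs with h
    · simp_rw [← h, ← sq]
      exact expect_comp_apply a (e · ^ 2)
    · rw [expect_comp_apply_mul_comp_apply h, he, zero_mul]
  simp_rw [sq (∑ a, _), sum_mul_sum, expect_sum_comm, hcross, sum_ite_eq, if_pos (mem_univ _),
    sum_const, card_univ, nsmul_eq_mul]

lemma expect_sq_card_fiber_sub [DecidableEq β] (b : β) :
    𝔼 f : α → β, ((#{a | f a = b} : ℝ) - Fintype.card α / Fintype.card β) ^ 2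
      = Fintype.card α * (Fintype.card β - 1) / Fintype.card β ^ 2 := by
  have : Nonempty β := ⟨b⟩
  have hcard : (Fintype.card β : ℝ) ≠ 0 := by positivity
  set e : β → ℝ := fun c => (if c = b then 1 else 0) - (Fintype.card β : ℝ)⁻¹
  have hfiber (f : α → β) :
      (#{a | f a = b} : ℝ) - Fintype.card α / Fintype.card β = ∑ a, e (f a) := by
    simp only [e, sum_sub_distrib, sum_boole, sum_const, card_univ, nsmul_eq_mul, div_eq_mul_inv]
  have he : 𝔼 c, e c = 0 := by simp [e, expect_sub_distrib]
  have he2 : 𝔼 c, e c ^ 2 = (Fintype.card β - 1) / Fintype.card β ^ 2 := by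
    have hsq (c : β) : e c ^ 2 = (if c = b then 1 else 0) * (1 - 2 * (Fintype.card β : ℝ)⁻¹)
        + ((Fintype.card β : ℝ)⁻¹) ^ 2 := by
      simp only [e]
      split_ifs <;> ring
    simp_rw [hsq, expect_add_distrib, ← expect_mul, Fintype.expect_ite_eq', Fintype.expect_const,
      NNRat.smul_def]
    push_cast
    field_simp
    ring
  simp_rw [hfiber, expect_sq_sum_comp_apply he, he2]
  ring

lemma expect_abs_card_fiber_sub_le [DecidableEq β] (b : β) :
    𝔼 f : α → β, |(#{a | f a = b} : ℝ) - Fintype.card α / Fintype.card β|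
      ≤ √(Fintype.card α * (Fintype.card β - 1) / Fintype.card β ^ 2) :=
  (expect_abs_le_sqrt_expect_sq univ _).trans_eq (congrArg _ (expect_sq_card_fiber_sub b))

end RandomFunction

lemma Finset.card_symmDiff_of_subset_or_subset {α : Type*} [DecidableEq α] {s t : Finset α}
    (h : s ⊆ t ∨ t ⊆ s) : (#(s ∆ t) : ℝ) = |(#s : ℝ) - #t| := by
  rcases h with h | h
  · rw [symmDiff_of_le h, card_sdiff_of_subset h, Nat.cast_sub (card_le_card h), abs_sub_comm,
      abs_of_nonneg (sub_nonneg.2 (mod_cast card_le_card h))]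
  · rw [symmDiff_of_ge h, card_sdiff_of_subset h, Nat.cast_sub (card_le_card h),
      abs_of_nonneg (sub_nonneg.2 (mod_cast card_le_card h))]

section MonotoneMaps
variable {α β : Type*} [Fintype α] [LinearOrder β]

/-- The sublevel sets of monotone maps are lower sets, hence nested. -/
lemma card_xor_eq_of_monotone [LinearOrder α] {g d : α → β} (hg : Monotone g) (hd : Monotone d)
    (b : β) :
    (#{a | ¬(g a ≤ b ↔ d a ≤ b)} : ℝ) = |(#{a | g a ≤ b} : ℝ) - #{a | d a ≤ b}| := by
  have hlower {f : α → β} (hf : Monotone f) : IsLowerSet (↑({a | f a ≤ b} : Finset α) : Set α) :=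
    fun a a' ha' ha => by simp_all [(hf ha').trans]
  rw [← card_symmDiff_of_subset_or_subset (mod_cast (hlower hg).total (hlower hd))]
  congr 2
  ext a
  simp only [mem_filter, mem_univ, true_and, mem_symmDiff]
  tauto

variable [Fintype β]

lemma card_le_eq_sum_card_eq (g : α → β) (b : β) :
    #{a | g a ≤ b} = ∑ c with c ≤ b, #{a | g a = c} := by
  rw [card_eq_sum_card_fiberwise (f := g) (t := {c | c ≤ b}) fun a ha => by simpa using ha]
  refine sum_congr rfl fun c hc => ?_
  rw [filter_filter]
  congr 1
  ext a
  simp only [mem_filter, mem_univ, true_and, and_iff_right_iff_imp]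
  exact fun h => h ▸ (mem_filter.1 hc).2

lemma card_ne_le_sum_card_xor (g d : α → β) :
    #{a | g a ≠ d a} ≤ ∑ b, #{a | ¬(g a ≤ b ↔ d a ≤ b)} := by
  classical
  refine (card_le_card fun a ha => ?_).trans card_biUnion_le
  simp only [mem_filter, mem_univ, true_and, mem_biUnion] at ha ⊢
  rcases lt_or_gt_of_ne ha with h | h
  · exact ⟨g a, by simp [h.not_ge]⟩
  · exact ⟨d a, by simp [h.not_ge]⟩

theorem card_ne_le_of_monotone [LinearOrder α] {g d : α → β} (hg : Monotone g) (hd : Monotone d) :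
    (#{a | g a ≠ d a} : ℝ)
      ≤ Fintype.card β * ∑ c, |(#{a | g a = c} : ℝ) - #{a | d a = c}| := by
  have hcumulative (b : β) : |(#{a | g a ≤ b} : ℝ) - #{a | d a ≤ b}|
      ≤ ∑ c, |(#{a | g a = c} : ℝ) - #{a | d a = c}| := by
    simp only [card_le_eq_sum_card_eq, Nat.cast_sum, ← sum_sub_distrib]
    exact (abs_sum_le_sum_abs _ _).trans
      (sum_le_sum_of_subset_of_nonneg (subset_univ _) fun _ _ _ => abs_nonneg _)
  calc (#{a | g a ≠ d a} : ℝ) ≤ ∑ b, (#{a | ¬(g a ≤ b ↔ d a ≤ b)} : ℝ) :=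
        mod_cast card_ne_le_sum_card_xor g d
    _ ≤ ∑ _b : β, ∑ c, |(#{a | g a = c} : ℝ) - #{a | d a = c}| := by
        gcongr with b
        rw [card_xor_eq_of_monotone hg hd]
        exact hcumulative b
    _ = _ := by rw [sum_const, card_univ, nsmul_eq_mul]

end MonotoneMaps

section Equipartition
variable {m n : ℕ} (hn : 0 < n) (hdvd : m ∣ n)

lemma monotone_dmap : Monotone (dmap m n hn hdvd) :=
  fun _ _ h => Nat.div_le_div_right h

lemma card_dmap_fiber (k : Fin m) : #{j | dmap m n hn hdvd j = k} = n / m := by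
  obtain ⟨b, rfl⟩ := hdvd
  have hm : 0 < m := Nat.pos_of_mul_pos_right hn
  have hb : 0 < b := Nat.pos_of_mul_pos_left hn
  have hblock : ∀ t ∈ Ico (k * b) (k * b + b), t < m * b := fun t ht => by
    have := k.isLt
    have := (mem_Ico.1 ht).2
    nlinarith
  rw [Nat.mul_div_cancel_left b hm]
  calc #{j | dmap m (m * b) hn ⟨b, rfl⟩ j = k}
      = #((Ico (k * b) (k * b + b)).attachFin hblock) := by
        congr 1
        ext j
        simp only [mem_filter, mem_univ, true_and, mem_attachFin, mem_Ico, dmap, Fin.ext_iff,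
          Nat.mul_div_cancel_left b hm]
        rw [← Nat.le_div_iff_mul_le hb, ← Nat.add_one_mul, ← Nat.div_lt_iff_lt_mul hb]
        omega
    _ = b := by rw [card_attachFin, Nat.card_Ico, Nat.add_sub_cancel_left]

end Equipartition

section Binning
variable {n m : ℕ}

lemma binOp_add (f : Fin n → Fin m) (x y : Fin n → ℝ) :
    binOp f (x + y) = binOp f x + binOp f y := by
  ext i
  simp [binOp, sum_add_distrib]

lemma binOp_congr {f g : Fin n → Fin m} {x : Fin n → ℝ} (h : ∀ j, x j ≠ 0 → f j = g j) :
    binOp f x = binOp g x := by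
  ext i
  simp only [binOp, sum_filter]
  refine sum_congr rfl fun j _ => ?_
  by_cases hx : x j = 0
  · simp [hx]
  · rw [h j hx]

lemma binOp_comp_perm (f : Fin n → Fin m) (σ : Equiv.Perm (Fin n)) (x : Fin n → ℝ) :
    binOp (f ∘ σ) x = binOp f (x ∘ σ.symm) := by
  ext i
  simp only [binOp, sum_filter]
  exact (Equiv.sum_comp σ.symm _).symm.trans (by simp)

lemma continuous_binOp (f : Fin n → Fin m) : Continuous (binOp f) :=
  continuous_pi fun _ => continuous_finsetSum _ fun j _ => continuous_apply j

lemma sum_abs_binOp_le (f : Fin n → Fin m) (x : Fin n → ℝ) :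
    ∑ i, |binOp f x i| ≤ ∑ j, |x j| :=
  calc ∑ i, |binOp f x i| ≤ ∑ i, ∑ j with f j = i, |x j| :=
        sum_le_sum fun _ _ => abs_sum_le_sum_abs _ _
    _ = ∑ j, |x j| := sum_fiberwise _ _ _

/-- The coordinates on which `f` and `g` agree go to the same bin, so they cancel. -/
lemma sum_abs_binOp_sub_binOp_le (f g : Fin n → Fin m) (x : Fin n → ℝ) :
    ∑ i, |binOp f x i - binOp g x i| ≤ 2 * ∑ j with f j ≠ g j, |x j| := by
  set y : Fin n → ℝ := fun j => if f j = g j then 0 else x j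
  have hagree : binOp f (x - y) = binOp g (x - y) :=
    binOp_congr fun j hj => by_contra fun h => hj <| by
      simp only [Pi.sub_apply, y, if_neg h, sub_self]
  have hsplit : binOp f x - binOp g x = binOp f y - binOp g y := by
    rw [show x = y + (x - y) by abel, binOp_add, binOp_add, hagree]
    abel
  calc ∑ i, |binOp f x i - binOp g x i| = ∑ i, |(binOp f y - binOp g y) i| := by
        rw [← hsplit]
        rfl
    _ ≤ ∑ i, (|binOp f y i| + |binOp g y i|) := sum_le_sum fun i _ => abs_sub _ _
    _ ≤ 2 * ∑ j, |y j| := by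
        rw [sum_add_distrib, two_mul]
        exact add_le_add (sum_abs_binOp_le f y) (sum_abs_binOp_le g y)
    _ = 2 * ∑ j with f j ≠ g j, |x j| := by
        rw [sum_filter]
        congr 1
        exact sum_congr rfl fun j _ => by by_cases h : f j = g j <;> simp [y, h]

end Binning

section Exchangeable
variable {ι α : Type*} [MeasurableSpace α]

def Exchangeable (μ : Measure (ι → α)) : Prop :=
  ∀ σ : Equiv.Perm ι, μ.map (fun x => x ∘ ⇑σ) = μ

variable {μ : Measure (ι → α)} {E : Type*} [NormedAddCommGroup E] [NormedSpace ℝ E]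

lemma Exchangeable.integral_comp_perm (hμ : Exchangeable μ) (σ : Equiv.Perm ι)
    (h : (ι → α) → E) : ∫ x, h (x ∘ σ) ∂μ = ∫ x, h x ∂μ :=
  let e : (ι → α) ≃ᵐ (ι → α) := MeasurableEquiv.arrowCongr' σ.symm (MeasurableEquiv.refl α)
  MeasurePreserving.integral_comp' (f := e) ⟨e.measurable, hμ σ⟩ h

lemma Exchangeable.integral_comp_apply [DecidableEq ι] (hμ : Exchangeable μ) (φ : α → E)
    (j k : ι) : ∫ x, φ (x j) ∂μ = ∫ x, φ (x k) ∂μ := by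
  simpa using hμ.integral_comp_perm (Equiv.swap j k) (fun x => φ (x k))

lemma Exchangeable.card_mul_integral_sum [Fintype ι] (hμ : Exchangeable μ) {φ : α → ℝ}
    (hφ : ∀ j, Integrable (fun x => φ (x j)) μ) (s : Finset ι) :
    Fintype.card ι * ∫ x, ∑ j ∈ s, φ (x j) ∂μ = #s * ∫ x, ∑ j, φ (x j) ∂μ := by
  classical
  have hj (j : ι) : Fintype.card ι * ∫ x, φ (x j) ∂μ = ∫ x, ∑ k, φ (x k) ∂μ := by
    simp [integral_finsetSum _ fun k _ => hφ k, hμ.integral_comp_apply φ _ j]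
  rw [integral_finsetSum _ fun j _ => hφ j, mul_sum]
  simp [hj]

end Exchangeable

section LipschitzBinning
variable {n m : ℕ} {L : ℝ} {q : (Fin m → ℝ) → ℝ}

lemma continuous_of_abs_sub_le_mul_sum (hL : 0 ≤ L)
    (hq : ∀ y z : Fin m → ℝ, |q y - q z| ≤ L * ∑ i, |y i - z i|) : Continuous q := by
  refine (LipschitzWith.of_dist_le_mul (K := ⟨L * m, by positivity⟩) fun y z => ?_).continuous
  have hsum : ∑ i, |y i - z i| ≤ m * dist y z := by
    simpa [Real.dist_eq] using sum_le_sum fun i (_ : i ∈ univ) => dist_le_pi_dist y z i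
  calc dist (q y) (q z) ≤ L * ∑ i, |y i - z i| := hq y z
    _ ≤ L * (m * dist y z) := by gcongr
    _ = L * m * dist y z := by ring

lemma abs_comp_binOp_le (hL : 0 ≤ L)
    (hq : ∀ y z : Fin m → ℝ, |q y - q z| ≤ L * ∑ i, |y i - z i|) (f : Fin n → Fin m)
    (x : Fin n → ℝ) : |q (binOp f x)| ≤ |q 0| + L * ∑ j, |x j| := by
  have := hq (binOp f x) 0
  simp only [Pi.zero_apply, sub_zero] at this
  have := sum_abs_binOp_le f x
  have := abs_sub_abs_le_abs_sub (q (binOp f x)) (q 0)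
  nlinarith

variable {μ : Measure (Fin n → ℝ)}

lemma integrable_comp_binOp [IsFiniteMeasure μ] (hint : Integrable (fun x => ∑ j, |x j|) μ)
    (hL : 0 ≤ L) (hq : ∀ y z : Fin m → ℝ, |q y - q z| ≤ L * ∑ i, |y i - z i|)
    (f : Fin n → Fin m) : Integrable (fun x => q (binOp f x)) μ := by
  refine Integrable.mono' ((integrable_const |q 0|).add (hint.const_mul L))
    ((continuous_of_abs_sub_le_mul_sum hL hq).comp (continuous_binOp f)).aestronglyMeasurable ?_
  filter_upwards with x
  exact abs_comp_binOp_le hL hq f x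

lemma Exchangeable.integral_comp_binOp_comp_perm (hμ : Exchangeable μ) (f : Fin n → Fin m)
    (σ : Equiv.Perm (Fin n)) : ∫ x, q (binOp (f ∘ σ) x) ∂μ = ∫ x, q (binOp f x) ∂μ := by
  simp_rw [binOp_comp_perm]
  exact hμ.integral_comp_perm σ.symm fun x => q (binOp f x)

lemma Exchangeable.card_mul_abs_integral_comp_binOp_sub_le [IsFiniteMeasure μ]
    (hμ : Exchangeable μ) (hint : Integrable (fun x => ∑ j, |x j|) μ) (hL : 0 ≤ L)
    (hq : ∀ y z : Fin m → ℝ, |q y - q z| ≤ L * ∑ i, |y i - z i|) (f g : Fin n → Fin m) :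
    n * |∫ x, q (binOp f x) ∂μ - ∫ x, q (binOp g x) ∂μ|
      ≤ 2 * L * #{j | f j ≠ g j} * ∫ x, ∑ j, |x j| ∂μ := by
  have hcoord (j : Fin n) : Integrable (fun x : Fin n → ℝ => |x j|) μ :=
    hint.mono' (continuous_apply j).abs.aestronglyMeasurable (ae_of_all _ fun x => by
      simpa using single_le_sum (f := fun k => |x k|) (fun k _ => abs_nonneg _) (mem_univ j))
  have hpointwise (x : Fin n → ℝ) :
      |q (binOp f x) - q (binOp g x)| ≤ 2 * L * ∑ j with f j ≠ g j, |x j| :=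
    calc |q (binOp f x) - q (binOp g x)| ≤ L * ∑ i, |binOp f x i - binOp g x i| := hq _ _
      _ ≤ L * (2 * ∑ j with f j ≠ g j, |x j|) := by
        gcongr
        exact sum_abs_binOp_sub_binOp_le f g x
      _ = 2 * L * ∑ j with f j ≠ g j, |x j| := by ring
  have hint_f := integrable_comp_binOp hint hL hq f
  have hint_g := integrable_comp_binOp hint hL hq g
  have hexch_sum := hμ.card_mul_integral_sum hcoord {j | f j ≠ g j}
  rw [Fintype.card_fin] at hexch_sum
  calc n * |∫ x, q (binOp f x) ∂μ - ∫ x, q (binOp g x) ∂μ|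
      ≤ n * ∫ x, 2 * L * ∑ j with f j ≠ g j, |x j| ∂μ := by
        rw [← integral_sub hint_f hint_g]
        gcongr
        exact abs_integral_le_integral_abs.trans (integral_mono (hint_f.sub hint_g).abs
          ((integrable_finsetSum _ fun j _ => hcoord j).const_mul _) hpointwise)
    _ = 2 * L * (n * ∫ x, ∑ j with f j ≠ g j, |x j| ∂μ) := by
        rw [integral_const_mul]
        ring
    _ = 2 * L * #{j | f j ≠ g j} * ∫ x, ∑ j, |x j| ∂μ := by
        rw [hexch_sum]
        ring

lemma Exchangeable.card_mul_abs_integral_comp_binOp_sub_dmap_le [IsFiniteMeasure μ]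
    (hμ : Exchangeable μ) (hint : Integrable (fun x => ∑ j, |x j|) μ) (hL : 0 ≤ L)
    (hq : ∀ y z : Fin m → ℝ, |q y - q z| ≤ L * ∑ i, |y i - z i|) (hn : 0 < n) (hdvd : m ∣ n)
    (f : Fin n → Fin m) :
    n * |∫ x, q (binOp f x) ∂μ - ∫ x, q (binOp (dmap m n hn hdvd) x) ∂μ|
      ≤ 2 * L * (m * ∑ k, |(#{j | f j = k} : ℝ) - n / m|) * ∫ x, ∑ j, |x j| ∂μ := by
  set g := f ∘ Tuple.sort f
  have hfiber (k : Fin m) : #{j | g j = k} = #{j | f j = k} :=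
    card_equiv (Tuple.sort f) fun j => by simp [g]
  have hm : (m : ℝ) ≠ 0 := by exact_mod_cast (Nat.pos_of_dvd_of_pos hdvd hn).ne'
  rw [← hμ.integral_comp_binOp_comp_perm f (Tuple.sort f)]
  refine (hμ.card_mul_abs_integral_comp_binOp_sub_le hint hL hq g _).trans ?_
  have hI : 0 ≤ ∫ x, ∑ j, |x j| ∂μ := integral_nonneg fun x => sum_nonneg fun j _ => abs_nonneg _
  gcongr
  calc (#{j | g j ≠ dmap m n hn hdvd j} : ℝ)
      ≤ Fintype.card (Fin m) * ∑ k, |(#{j | g j = k} : ℝ) - #{j | dmap m n hn hdvd j = k}| :=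
        card_ne_le_of_monotone (Tuple.monotone_sort f) (monotone_dmap hn hdvd)
    _ = m * ∑ k, |(#{j | f j = k} : ℝ) - n / m| := by
        simp [hfiber, card_dmap_fiber, Nat.cast_div hdvd hm]

end LipschitzBinning

theorem stmt8 (m n : ℕ) (hm : 1 ≤ m) (hn : 1 ≤ n) (hdvd : m ∣ n)
    (μ : Measure (Fin n → ℝ)) [IsProbabilityMeasure μ]
    (hexch : ∀ σ : Equiv.Perm (Fin n), μ.map (fun x => x ∘ ⇑σ) = μ)
    (hint : Integrable (fun x : Fin n → ℝ => ∑ j, |x j|) μ)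
    (L : ℝ) (hL : 0 ≤ L) (q : (Fin m → ℝ) → ℝ)
    (hq : ∀ y z : Fin m → ℝ, |q y - q z| ≤ L * ∑ i, |y i - z i|) :
    |((m : ℝ) ^ n)⁻¹ * (∑ f : Fin n → Fin m, ∫ x, q (binOp f x) ∂μ)
        - ∫ x, q (binOp (dmap m n hn hdvd) x) ∂μ|
      ≤ 2 * L * Real.sqrt ((m : ℝ) ^ 2 * ((m : ℝ) - 1) / (n : ℝ)) *
          ∫ x, (∑ j, |x j|) ∂μ := by
  have hμ : Exchangeable μ := hexch
  have : NeZero m := ⟨by omega⟩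
  set d := dmap m n hn hdvd
  set A : (Fin n → Fin m) → ℝ := fun f => ∫ x, q (binOp f x) ∂μ
  set I := ∫ x, ∑ j, |x j| ∂μ
  set dev : (Fin n → Fin m) → Fin m → ℝ := fun f k => |(#{j | f j = k} : ℝ) - n / m|
  have hI : 0 ≤ I := integral_nonneg fun x => sum_nonneg fun j _ => abs_nonneg _
  have hbin (f : Fin n → Fin m) : |A f - A d| ≤ 2 * L * m * I / n * ∑ k, dev f k := by
    rw [div_mul_eq_mul_div, le_div_iff₀' (by positivity)]
    refine (hμ.card_mul_abs_integral_comp_binOp_sub_dmap_le hint hL hq hn hdvd f).trans_eq ?_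
    simp only [dev, I]
    ring
  have hdev (k : Fin m) : 𝔼 f, dev f k ≤ √(n * (m - 1) / m ^ 2) := by
    simpa using expect_abs_card_fiber_sub_le (α := Fin n) k
  have hsqrt : m * m / n * √(n * (m - 1) / m ^ 2) = √(m ^ 2 * (m - 1) / n) := by
    rw [← Real.sqrt_sq (by positivity : (0 : ℝ) ≤ m * m / n), ← Real.sqrt_mul (by positivity)]
    congr 1
    field_simp
  calc |((m : ℝ) ^ n)⁻¹ * (∑ f, A f) - A d|
      = |𝔼 f, (A f - A d)| := by
        rw [expect_sub_distrib, Fintype.expect_const, expect_eq_sum_div_card, card_univ,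
          Fintype.card_fun, Fintype.card_fin, Fintype.card_fin, inv_mul_eq_div, Nat.cast_pow]
    _ ≤ 𝔼 f, |A f - A d| := abs_expect_le _ _
    _ ≤ 𝔼 f, 2 * L * m * I / n * ∑ k, dev f k := expect_le_expect fun f _ => hbin f
    _ = 2 * L * m * I / n * ∑ k, 𝔼 f, dev f k := by rw [← mul_expect, expect_sum_comm]
    _ ≤ 2 * L * m * I / n * ∑ _k : Fin m, √(n * (m - 1) / m ^ 2) := by
        gcongr with k
        exact hdev k
    _ = 2 * L * √(m ^ 2 * (m - 1) / n) * I := by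
        rw [sum_const, card_univ, Fintype.card_fin, nsmul_eq_mul, ← hsqrt]
        ring
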